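/- Define σ: (-1, ∞) → ℝ by σ(k) = arccos(k)/(2√(1-k²)) for k ∈ (-1,1), σ(1) = 1/2, and σ(k) = -ln(k - √(k²-1))/(2√(k²-1)) for k > 1. Then σ is continuous, strictly decreasing, positive, and lim_{k→-1⁺} σ(k) = +∞, lim_{k→+∞} σ(k) = 0. -/

import Mathlib

open Real Set Filter Topology

/-- The function σ of the paper, defined piecewise on (-1,∞). -/
noncomputable def sigmaFun (k : ℝ) : ℝ :=
  if k < 1 then arccos k / (2 * sqrt (1 - k^2))
  else if k = 1 then 1/2
  else -log (k - sqrt (k^2 - 1)) / (2 * sqrt (k^2 - 1))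

-- basic inequalities
lemma aux_sin1 {θ : ℝ} (h0 : 0 < θ) (hπ : θ < π) : θ * cos θ < sin θ := by
  have key : StrictMonoOn (fun θ : ℝ => sin θ - θ * cos θ) (Icc 0 π) := by
    apply strictMonoOn_of_deriv_pos (convex_Icc 0 π)
    · fun_prop
    · intro x hx
      rw [interior_Icc] at hx
      have hd : HasDerivAt (fun θ : ℝ => sin θ - θ * cos θ) (x * sin x) x := by
        have h := (Real.hasDerivAt_sin x).sub ((hasDerivAt_id x).mul (Real.hasDerivAt_cos x))
        exact h.congr_deriv (by simp only [id_eq]; ring)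
      rw [hd.deriv]
      exact mul_pos hx.1 (sin_pos_of_pos_of_lt_pi hx.1 hx.2)
  have h := key (left_mem_Icc.2 pi_pos.le) (mem_Icc.2 ⟨h0.le, hπ.le⟩) h0
  simpa using h

lemma aux_sinh1 {u : ℝ} (hu : 0 < u) : sinh u < u * cosh u := by
  have key : StrictMonoOn (fun u : ℝ => u * cosh u - sinh u) (Ici 0) := by
    apply strictMonoOn_of_deriv_pos (convex_Ici 0)
    · fun_prop
    · intro x hx
      rw [interior_Ici] at hx
      have hd : HasDerivAt (fun u : ℝ => u * cosh u - sinh u) (x * sinh x) x := by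
        have h := ((hasDerivAt_id x).mul (Real.hasDerivAt_cosh x)).sub (Real.hasDerivAt_sinh x)
        exact h.congr_deriv (by simp only [id_eq]; ring)
      rw [hd.deriv]
      exact mul_pos hx (sinh_pos_iff.2 hx)
  have h := key self_mem_Ici (mem_Ici.2 hu.le) hu
  simpa using h

lemma F_mono : StrictMonoOn (fun θ : ℝ => θ / (2 * sin θ)) (Ioo 0 π) := by
  apply strictMonoOn_of_deriv_pos (convex_Ioo 0 π)
  · apply ContinuousOn.div continuousOn_id (by fun_prop)
    intro x hx
    exact mul_ne_zero two_ne_zero (sin_pos_of_pos_of_lt_pi hx.1 hx.2).ne'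
  · intro x hx
    rw [interior_Ioo] at hx
    have hs : 0 < sin x := sin_pos_of_pos_of_lt_pi hx.1 hx.2
    have hd : HasDerivAt (fun θ : ℝ => θ / (2 * sin θ))
        ((1 * (2 * sin x) - x * (2 * cos x)) / (2 * sin x) ^ 2) x :=
      (hasDerivAt_id x).div ((Real.hasDerivAt_sin x).const_mul 2)
        (mul_ne_zero two_ne_zero hs.ne')
    rw [hd.deriv]
    apply div_pos
    · nlinarith [aux_sin1 hx.1 hx.2]
    · positivity

lemma G_anti : StrictAntiOn (fun u : ℝ => u / (2 * sinh u)) (Ioi 0) := by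
  apply strictAntiOn_of_deriv_neg (convex_Ioi 0)
  · apply ContinuousOn.div continuousOn_id (by fun_prop)
    intro x hx
    exact mul_ne_zero two_ne_zero (sinh_pos_iff.2 hx).ne'
  · intro x hx
    rw [interior_Ioi] at hx
    have hs : 0 < sinh x := sinh_pos_iff.2 hx
    have hd : HasDerivAt (fun u : ℝ => u / (2 * sinh u))
        ((1 * (2 * sinh x) - x * (2 * cosh x)) / (2 * sinh x) ^ 2) x :=
      (hasDerivAt_id x).div ((Real.hasDerivAt_sinh x).const_mul 2)
        (mul_ne_zero two_ne_zero hs.ne')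
    rw [hd.deriv]
    apply div_neg_of_neg_of_pos
    · nlinarith [aux_sinh1 hx]
    · positivity

lemma sigma_left {k : ℝ} (h2 : k < 1) :
    sigmaFun k = arccos k / (2 * sin (arccos k)) := by
  rw [sigmaFun, if_pos h2, sin_arccos]

lemma sigma_one : sigmaFun 1 = 1/2 := by
  rw [sigmaFun, if_neg (lt_irrefl 1), if_pos rfl]

lemma sigma_right {k : ℝ} (hk : 1 < k) :
    sigmaFun k = arsinh (sqrt (k^2 - 1)) / (2 * sqrt (k^2 - 1)) := by
  have hk0 : (0:ℝ) < k := lt_trans one_pos hk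
  have h1 : (0:ℝ) < k^2 - 1 := by nlinarith
  have hs0 : 0 < sqrt (k^2 - 1) := sqrt_pos.2 h1
  have hs2 : sqrt (k^2 - 1) ^ 2 = k^2 - 1 := sq_sqrt h1.le
  have h3 : sqrt (1 + sqrt (k^2 - 1) ^ 2) = k := by
    rw [hs2]; rw [show 1 + (k^2 - 1) = k^2 by ring, sqrt_sq hk0.le]
  have h4 : k - sqrt (k^2 - 1) = (sqrt (k^2 - 1) + k)⁻¹ := by
    have hne : √(k ^ 2 - 1) + k ≠ 0 := by positivity
    field_simp
    nlinarith [hs2]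
  have h5 : -log (k - sqrt (k^2 - 1)) = arsinh (sqrt (k^2 - 1)) := by
    rw [h4, log_inv, neg_neg, arsinh, h3]
  rw [sigmaFun, if_neg (not_lt.2 hk.le), if_neg hk.ne', h5]

lemma arccos_mem {k : ℝ} (h1 : -1 < k) (h2 : k < 1) : arccos k ∈ Ioo 0 π := by
  refine ⟨arccos_pos.2 h2, ?_⟩
  have := neg_pi_div_two_lt_arcsin.2 h1
  rw [Real.arccos]; linarith

lemma sigma_eq_F {k : ℝ} (h2 : k < 1) :
    sigmaFun k = (fun θ : ℝ => θ / (2 * sin θ)) (arccos k) := sigma_left h2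

lemma sigma_eq_G {k : ℝ} (hk : 1 < k) :
    sigmaFun k = (fun u : ℝ => u / (2 * sinh u)) (arsinh (sqrt (k^2 - 1))) := by
  rw [sigma_right hk]; simp [Real.sinh_arsinh]

lemma half_lt_sigma {k : ℝ} (h1 : -1 < k) (h2 : k < 1) : 1/2 < sigmaFun k := by
  obtain ⟨hθ0, hθπ⟩ := arccos_mem h1 h2
  have hs : 0 < sin (arccos k) := sin_pos_of_pos_of_lt_pi hθ0 hθπ
  rw [sigma_left h2, lt_div_iff₀ (by positivity)]
  have := Real.sin_lt hθ0
  linarith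

lemma sigma_lt_half {k : ℝ} (hk : 1 < k) : sigmaFun k < 1/2 := by
  have h1 : (0:ℝ) < k^2 - 1 := by nlinarith
  have hs0 : 0 < sqrt (k^2 - 1) := sqrt_pos.2 h1
  have hu0 : 0 < arsinh (sqrt (k^2 - 1)) := arsinh_pos_iff.2 hs0
  have hlt : arsinh (sqrt (k^2 - 1)) < sqrt (k^2 - 1) := by
    have := Real.self_lt_sinh_iff.2 hu0
    rwa [Real.sinh_arsinh] at this
  rw [sigma_right hk, div_lt_iff₀ (by positivity)]
  linarith

lemma sigma_pos : ∀ k ∈ Ioi (-1:ℝ), 0 < sigmaFun k := by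
  intro k hk
  rcases lt_trichotomy k 1 with h | h | h
  · exact lt_trans one_half_pos (half_lt_sigma hk h)
  · rw [h, sigma_one]; norm_num
  · have h1 : (0:ℝ) < k^2 - 1 := by nlinarith [lt_trans (show (0:ℝ) < 1 by norm_num) h]
    have hs0 : 0 < sqrt (k^2 - 1) := sqrt_pos.2 h1
    rw [sigma_right h]
    exact div_pos (arsinh_pos_iff.2 hs0) (by positivity)

lemma sigma_anti : StrictAntiOn sigmaFun (Ioi (-1:ℝ)) := by
  intro a ha b hb hab
  simp only [mem_Ioi] at ha hb
  rcases lt_trichotomy b 1 with hb1 | hb1 | hb1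
  · -- both < 1
    have ha1 : a < 1 := lt_trans hab hb1
    rw [sigma_eq_F ha1, sigma_eq_F hb1]
    apply F_mono (arccos_mem hb hb1) (arccos_mem ha ha1)
    exact Real.strictAntiOn_arccos ⟨ha.le, ha1.le⟩ ⟨le_trans ha.le hab.le, hb1.le⟩ hab
  · subst hb1
    exact sigma_one ▸ half_lt_sigma ha hab
  · rcases lt_trichotomy a 1 with ha1 | ha1 | ha1
    · exact lt_trans (sigma_lt_half hb1) (half_lt_sigma ha ha1)
    · subst ha1; exact sigma_one ▸ sigma_lt_half hb1
    · rw [sigma_eq_G ha1, sigma_eq_G hb1]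
      have hsa : (0:ℝ) < a^2 - 1 := by nlinarith
      have hsb : (0:ℝ) < b^2 - 1 := by nlinarith [lt_trans ha1 hab]
      have hss : sqrt (a^2 - 1) < sqrt (b^2 - 1) := by
        apply Real.sqrt_lt_sqrt hsa.le
        nlinarith
      have hua : 0 < arsinh (sqrt (a^2-1)) := arsinh_pos_iff.2 (sqrt_pos.2 hsa)
      exact G_anti (mem_Ioi.2 hua) (mem_Ioi.2 (lt_trans hua (arsinh_strictMono hss)))
        (arsinh_strictMono hss)

-- limit of θ/(2 sin θ) at 0⁺
lemma F_lim : Tendsto (fun θ : ℝ => θ / (2 * sin θ)) (𝓝[>] 0) (𝓝 (1/2)) := by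
  have hsin : Tendsto (fun x : ℝ => sin x / x) (𝓝[>] 0) (𝓝 1) := by
    have h := hasDerivAt_iff_tendsto_slope.1 (Real.hasDerivAt_sin 0)
    rw [Real.cos_zero] at h
    have h2 := h.mono_left (nhdsWithin_mono 0 (fun x hx => ne_of_gt hx : Ioi (0:ℝ) ⊆ {0}ᶜ))
    refine h2.congr fun x => ?_
    simp [slope_def_field]
  have h3 : Tendsto (fun x : ℝ => (2 * (sin x / x))⁻¹) (𝓝[>] 0) (𝓝 (1/2)) := by
    have h4 := (hsin.const_mul 2).inv₀ (by norm_num : (2:ℝ) * 1 ≠ 0)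
    norm_num at h4
    convert h4 using 2
    norm_num
  apply h3.congr'
  filter_upwards [Ioo_mem_nhdsGT_of_mem (⟨le_refl 0, pi_pos⟩ : (0:ℝ) ∈ Ico 0 π)] with x hx
  have hs : 0 < sin x := sin_pos_of_pos_of_lt_pi hx.1 hx.2
  have hx0 : x ≠ 0 := ne_of_gt hx.1
  field_simp

-- limit of arsinh s/(2 s) at 0⁺
lemma G_lim : Tendsto (fun s : ℝ => arsinh s / (2 * s)) (𝓝[>] 0) (𝓝 (1/2)) := by
  have h := hasDerivAt_iff_tendsto_slope.1 (Real.hasDerivAt_arsinh 0)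
  have h0 : ((Real.sqrt (1 + 0 ^ 2))⁻¹ : ℝ) = 1 := by norm_num
  rw [h0] at h
  have h2 := h.mono_left (nhdsWithin_mono 0 (fun x hx => ne_of_gt hx : Ioi (0:ℝ) ⊆ {0}ᶜ))
  have h3 : Tendsto (fun s : ℝ => arsinh s / s) (𝓝[>] 0) (𝓝 1) := by
    refine h2.congr fun x => ?_
    simp [slope_def_field]
  have h4 := h3.div_const 2
  rw [show (1:ℝ)/2 = 1/2 from rfl] at h4
  apply h4.congr fun x => ?_
  rw [div_div, mul_comm]

lemma contAt_one : ContinuousAt sigmaFun 1 := by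
  rw [ContinuousAt, sigma_one]
  have hsplit : 𝓝 (1:ℝ) = 𝓝[<] 1 ⊔ (𝓝[{1}] 1 ⊔ 𝓝[>] 1) := by
    rw [← nhdsWithin_union, ← nhdsWithin_union, show Iio (1:ℝ) ∪ ({1} ∪ Ioi 1) = univ from by
      ext x
      simp only [mem_union, mem_Iio, mem_singleton_iff, mem_Ioi, mem_univ, iff_true]
      exact lt_trichotomy x 1, nhdsWithin_univ]
  rw [hsplit, tendsto_sup, tendsto_sup]
  refine ⟨?_, ?_, ?_⟩
  · -- from the left
    have harccos : Tendsto arccos (𝓝[<] 1) (𝓝[>] 0) := by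
      rw [tendsto_nhdsWithin_iff]
      constructor
      · have := Real.continuous_arccos.tendsto 1
        rw [Real.arccos_one] at this
        exact this.mono_left nhdsWithin_le_nhds
      · filter_upwards [self_mem_nhdsWithin] with x hx
        exact arccos_pos.2 hx
    have := F_lim.comp harccos
    apply this.congr'
    filter_upwards [self_mem_nhdsWithin] with x hx
    exact (sigma_left hx).symm
  · rw [nhdsWithin_singleton, tendsto_pure_left]
    intro s hs
    exact sigma_one ▸ mem_of_mem_nhds hs
  · have hsqrt : Tendsto (fun k : ℝ => sqrt (k^2 - 1)) (𝓝[>] 1) (𝓝[>] 0) := by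
      rw [tendsto_nhdsWithin_iff]
      constructor
      · have : Tendsto (fun k : ℝ => sqrt (k^2 - 1)) (𝓝 1) (𝓝 (sqrt (1^2 - 1))) := by
          apply Continuous.tendsto
          fun_prop
        simp at this
        exact this.mono_left nhdsWithin_le_nhds
      · filter_upwards [self_mem_nhdsWithin] with x hx
        have : (0:ℝ) < x^2 - 1 := by simp at hx; nlinarith
        exact sqrt_pos.2 this
    have := G_lim.comp hsqrt
    apply this.congr'
    filter_upwards [self_mem_nhdsWithin] with x hx
    exact (sigma_right hx).symm

lemma sigma_contOn : ContinuousOn sigmaFun (Ioi (-1:ℝ)) := by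
  intro x hx
  simp only [mem_Ioi] at hx
  rcases lt_trichotomy x 1 with h | h | h
  · apply ContinuousAt.continuousWithinAt
    have hcont : ContinuousOn (fun k : ℝ => arccos k / (2 * sin (arccos k))) (Ioo (-1:ℝ) 1) := by
      apply ContinuousOn.div Real.continuous_arccos.continuousOn
        ((continuous_const.mul (Real.continuous_sin.comp Real.continuous_arccos)).continuousOn)
      intro y hy
      have := sin_pos_of_pos_of_lt_pi (arccos_mem hy.1 hy.2).1 (arccos_mem hy.1 hy.2).2
      exact mul_ne_zero two_ne_zero this.ne'
    have hco : ContinuousOn sigmaFun (Ioo (-1:ℝ) 1) :=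
      hcont.congr fun y hy => sigma_left hy.2
    exact hco.continuousAt (Ioo_mem_nhds hx h)
  · subst h; exact contAt_one.continuousWithinAt
  · apply ContinuousAt.continuousWithinAt
    have hcont : ContinuousOn (fun k : ℝ => arsinh (sqrt (k^2 - 1)) / (2 * sqrt (k^2 - 1)))
        (Ioi (1:ℝ)) := by
      have c1 : Continuous fun k : ℝ => sqrt (k^2 - 1) := by fun_prop
      apply ContinuousOn.div (Real.continuous_arsinh.comp c1).continuousOn
        (continuous_const.mul c1).continuousOn
      intro y hy
      simp only [mem_Ioi] at hy
      have h2 : (0:ℝ) < y^2 - 1 := by nlinarith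
      have := sqrt_pos.2 h2
      exact mul_ne_zero two_ne_zero this.ne'
    have hco : ContinuousOn sigmaFun (Ioi (1:ℝ)) :=
      hcont.congr fun y hy => sigma_right hy
    exact hco.continuousAt (Ioi_mem_nhds h)

lemma sigma_tendsto_neg_one : Tendsto sigmaFun (𝓝[>] (-1:ℝ)) atTop := by
  have hden : Tendsto (fun k : ℝ => 2 * sqrt (1 - k^2)) (𝓝[>] (-1:ℝ)) (𝓝[>] 0) := by
    rw [tendsto_nhdsWithin_iff]
    constructor
    · have hc : Continuous fun k : ℝ => 2 * sqrt (1 - k^2) := by fun_prop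
      have := hc.tendsto (-1)
      norm_num at this
      exact this.mono_left nhdsWithin_le_nhds
    · filter_upwards [Ioo_mem_nhdsGT_of_mem
        (⟨le_refl (-1:ℝ), by norm_num⟩ : (-1:ℝ) ∈ Ico (-1:ℝ) 0)] with x hx
      have h1 : x^2 < 1 := by nlinarith [hx.1, hx.2]
      have h2 : 0 < sqrt (1 - x^2) := sqrt_pos.2 (by linarith)
      rw [mem_Ioi]; positivity
  have hinv : Tendsto (fun k : ℝ => (2 * sqrt (1 - k^2))⁻¹) (𝓝[>] (-1:ℝ)) atTop :=
    tendsto_inv_nhdsGT_zero.comp hden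
  have hbase : Tendsto (fun k : ℝ => π/2 * (2 * sqrt (1 - k^2))⁻¹) (𝓝[>] (-1:ℝ)) atTop :=
    Tendsto.const_mul_atTop (by positivity) hinv
  apply tendsto_atTop_mono' _ _ hbase
  filter_upwards [Ioo_mem_nhdsGT_of_mem
    (⟨le_refl (-1:ℝ), by norm_num⟩ : (-1:ℝ) ∈ Ico (-1:ℝ) 0)] with x hx
  have hx1 : x < 1 := lt_trans hx.2 one_pos
  rw [sigma_left hx1, sin_arccos, div_eq_mul_inv]
  have harc : π/2 ≤ arccos x := by
    have := Real.arcsin_nonpos.2 hx.2.le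
    rw [Real.arccos]; linarith
  exact mul_le_mul_of_nonneg_right harc (by positivity)

lemma sigma_tendsto_atTop : Tendsto sigmaFun atTop (𝓝 0) := by
  have hs : Tendsto (fun k : ℝ => sqrt (k^2 - 1)) atTop atTop := by
    apply tendsto_atTop_mono _ (tendsto_atTop_add_const_right atTop (-1) tendsto_id)
    intro k
    rcases le_or_gt k 1 with h | h
    · have : k + (-1) ≤ 0 := by linarith
      exact le_trans this (sqrt_nonneg _)
    · have h0 : (0:ℝ) ≤ k - 1 := by linarith
      calc k + (-1) = sqrt ((k-1)^2) := by rw [sqrt_sq h0]; ring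
        _ ≤ sqrt (k^2 - 1) := sqrt_le_sqrt (by nlinarith)
  have h1 : Tendsto (fun s : ℝ => log 3 / (2*s)) atTop (𝓝 0) :=
    tendsto_const_nhds.div_atTop (Tendsto.const_mul_atTop two_pos tendsto_id)
  have h2 : Tendsto (fun s : ℝ => log s / (2*s)) atTop (𝓝 0) := by
    have := Real.tendsto_pow_log_div_mul_add_atTop 2 0 1 two_ne_zero
    simpa using this
  have hB : Tendsto (fun s : ℝ => (log 3 + log s) / (2*s)) atTop (𝓝 0) := by
    have := h1.add h2
    norm_num at this
    exact this.congr fun s => (add_div _ _ _).symm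
  have hcomp := hB.comp hs
  apply squeeze_zero' _ _ hcomp
  · filter_upwards [eventually_ge_atTop 2] with k hk
    have hk1 : (1:ℝ) < k := by linarith
    have hp : (0:ℝ) < k^2 - 1 := by nlinarith
    have hs0 : 0 < sqrt (k^2 - 1) := sqrt_pos.2 hp
    rw [sigma_right hk1]
    have := Real.arsinh_nonneg_iff.2 hs0.le
    positivity
  · filter_upwards [eventually_ge_atTop 2] with k hk
    have hk1 : (1:ℝ) < k := by linarith
    have hp : (0:ℝ) < k^2 - 1 := by nlinarith
    have hs0 : 0 < sqrt (k^2 - 1) := sqrt_pos.2 hp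
    have hs1 : 1 ≤ sqrt (k^2 - 1) := by
      by_contra hcon
      push_neg at hcon
      nlinarith [sq_sqrt hp.le, sqrt_nonneg (k^2-1)]
    rw [sigma_right hk1]
    set s := sqrt (k^2 - 1) with hsdef
    have key : arsinh s ≤ log 3 + log s := by
      have hsq : sqrt (1 + s^2) ≤ 2 * s := by
        rw [show 2 * s = sqrt ((2*s)^2) from by rw [sqrt_sq (by positivity)]]
        exact sqrt_le_sqrt (by nlinarith)
      have hsum : s + sqrt (1 + s^2) ≤ 3 * s := by linarith
      calc arsinh s = log (s + sqrt (1 + s^2)) := rfl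
        _ ≤ log (3 * s) := Real.log_le_log (by positivity) hsum
        _ = log 3 + log s := Real.log_mul (by norm_num) hs0.ne'
    simp only [Function.comp]
    gcongr

/-- σ is continuous, strictly decreasing and positive on (-1,∞), tends to +∞ at -1⁺
and to 0 at +∞. -/
theorem stmt14 :
    ContinuousOn sigmaFun (Ioi (-1 : ℝ)) ∧
    StrictAntiOn sigmaFun (Ioi (-1 : ℝ)) ∧
    (∀ k ∈ Ioi (-1 : ℝ), 0 < sigmaFun k) ∧
    Tendsto sigmaFun (nhdsWithin (-1 : ℝ) (Ioi (-1 : ℝ))) atTop ∧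
    Tendsto sigmaFun atTop (nhds 0) :=
  ⟨sigma_contOn, sigma_anti, sigma_pos, sigma_tendsto_neg_one, sigma_tendsto_atTop⟩
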